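/- arXiv:1508.07133 — 6 statements merged into one kernel-verified Lean document; each statement's English description precedes it below -/
import Mathlib

section
/- Let S be a semigroup, n a positive natural number, and let A₁, ..., Aₙ be subsets of S with S = A₁ ∪ ... ∪ Aₙ. Then there exist an index i ∈ {1, ..., n} and a subset K of S with |K| ≤ 2^(2^(n-1) - 1) such that S = K⁻¹Δ(Aᵢ), i.e., every element of S lies in k⁻¹Δ(Aᵢ) for some k ∈ K. -/
/-- `Delta A = {x ∈ S : xA ∩ A ≠ ∅}` where `xA = {x * a : a ∈ A}`. -/
def Delta {S : Type*} [Semigroup S] (A : Set S) : Set S :=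
  {x : S | ((x * ·) '' A ∩ A).Nonempty}

/-- `setPreimg F B = F⁻¹B = ⋃_{a ∈ F} {x : a * x ∈ B}`. -/
def setPreimg {S : Type*} [Semigroup S] (F B : Set S) : Set S :=
  ⋃ a ∈ F, {x : S | a * x ∈ B}

/-- Action of an optional left multiplier. -/
def actL {S : Type*} [Semigroup S] : Option S → S → S
  | none, x => x
  | some u, x => u * x

/-- Append an optional right multiplier. -/
def actR {S : Type*} [Semigroup S] : S → Option S → S
  | r, none => r
  | r, some v => r * v

lemma actL_mul {S : Type*} [Semigroup S] (M : Option S) (s t : S) :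
    actL M (s * t) = actL M s * t := by
  cases M <;> simp [actL, mul_assoc]

lemma actL_key {S : Type*} [Semigroup S] (M L : Option S) (s t : S) :
    actL (some (actR (actL M s) L)) t = actL M (s * actL L t) := by
  cases M <;> cases L <;> simp [actL, actR, mul_assoc]

/-- Budget function: `Fb m ℓ` bounds the size of `K` for `m+1` cells with
multiplier lists of length `≤ ℓ`. -/
def Fb : ℕ → ℕ → ℕ
  | 0, l => l
  | m+1, l => max l (Fb m (l * (1 + l)))

lemma Fb_le : ∀ (m l : ℕ), 1 ≤ l → Fb m l ≤ l ^ (2 ^ m) * 2 ^ (2 ^ m - 1) := by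
  intro m
  induction m with
  | zero => intro l hl; simp [Fb]
  | succ m ih =>
    intro l hl
    have h2 : 1 ≤ 2 ^ m := Nat.one_le_two_pow
    have h2' : 2 ^ (m + 1) = 2 * 2 ^ m := by ring
    have hll : 1 ≤ l * (1 + l) := by nlinarith
    have key : Fb m (l * (1 + l)) ≤ l ^ (2 ^ (m + 1)) * 2 ^ (2 ^ (m + 1) - 1) := by
      refine le_trans (ih (l * (1 + l)) hll) ?_
      have hle : (l * (1 + l)) ^ (2 ^ m) ≤ (2 * l ^ 2) ^ (2 ^ m) :=
        Nat.pow_le_pow_left (by nlinarith) _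
      calc (l * (1 + l)) ^ (2 ^ m) * 2 ^ (2 ^ m - 1)
          ≤ (2 * l ^ 2) ^ (2 ^ m) * 2 ^ (2 ^ m - 1) := Nat.mul_le_mul_right _ hle
        _ = l ^ (2 ^ (m + 1)) * 2 ^ (2 ^ (m + 1) - 1) := by
            rw [mul_pow, ← pow_mul]
            have e1 : 2 * 2 ^ m = 2 ^ (m + 1) := by ring
            have e4 : 2 ^ (m + 1) - 1 = 2 ^ m + (2 ^ m - 1) := by omega
            rw [e1, e4, pow_add]
            ring
    have hl' : l ≤ l ^ (2 ^ (m + 1)) * 2 ^ (2 ^ (m + 1) - 1) := by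
      calc l ≤ l ^ (2 ^ (m + 1)) := Nat.le_self_pow (by positivity) _
        _ ≤ _ := Nat.le_mul_of_pos_right _ (by positivity)
    simpa [Fb] using max_le hl' key

/-- Core combinatorial lemma, by induction on the number of cells. -/
lemma core {S : Type*} [Semigroup S] :
    ∀ (m ℓ N : ℕ) (A : Fin (m + 1) → Set S) (Λ : Fin (m + 1) → List (Option S)),
      (∀ i, (Λ i).length ≤ ℓ) →
      (∀ x : S, ∃ i, ∃ l ∈ Λ i, actL l x ∈ A i) →
      Fb m ℓ ≤ N →
      ∃ i, ∃ W : List S, W.length ≤ N ∧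
        ∀ x : S, ∃ w ∈ W, ∃ a ∈ A i, w * x * a ∈ A i := by
  intro m
  induction m with
  | zero =>
    intro ℓ N A Λ hΛ hcov hN
    rcases isEmpty_or_nonempty S with hS | ⟨⟨s₀⟩⟩
    · exact ⟨0, [], by simp, fun x => isEmptyElim x⟩
    obtain ⟨i₀, l₀, hl₀, ha₀⟩ := hcov s₀
    have hi₀ : i₀ = 0 := Fin.fin_one_eq_zero _
    subst hi₀
    refine ⟨0, (Λ 0).map (fun l => actL l s₀), by simpa using le_trans (hΛ 0) hN, ?_⟩
    intro x
    obtain ⟨i, l, hl, h⟩ := hcov (s₀ * x * actL l₀ s₀)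
    have hi : i = 0 := Fin.fin_one_eq_zero _
    subst hi
    refine ⟨actL l s₀, List.mem_map_of_mem hl, actL l₀ s₀, ha₀, ?_⟩
    have : actL l s₀ * x * actL l₀ s₀ = actL l (s₀ * x * actL l₀ s₀) := by
      rw [actL_mul, actL_mul]
    rw [this]; exact h
  | succ m ih =>
    intro ℓ N A Λ hΛ hcov hN
    have hN1 : ℓ ≤ N := le_trans (le_max_left _ _) hN
    have hN2 : Fb m (ℓ * (1 + ℓ)) ≤ N := le_trans (le_max_right _ _) hN
    rcases isEmpty_or_nonempty S with hS | ⟨⟨s₀⟩⟩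
    · exact ⟨Fin.last _, [], by simp, fun x => isEmptyElim x⟩
    by_cases hB : ∃ W : List S, W.length ≤ N ∧
        ∀ x : S, ∃ w ∈ W, ∃ b ∈ A (Fin.last (m + 1)), w * x * b ∈ A (Fin.last (m + 1))
    · obtain ⟨W, h1, h2⟩ := hB
      exact ⟨Fin.last _, W, h1, h2⟩
    push_neg at hB
    obtain ⟨y, hy⟩ := hB ((Λ (Fin.last (m + 1))).map (fun L => actL L s₀))
      (by simpa using le_trans (hΛ _) hN1)
    -- hy : ∀ w ∈ map, ∀ b ∈ B, w * y * b ∉ B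
    set B := A (Fin.last (m + 1)) with hBdef
    set ΛB := Λ (Fin.last (m + 1)) with hΛB
    refine ?_
    obtain ⟨j, W, hWlen, hW⟩ := ih (ℓ * (1 + ℓ)) N (fun j => A j.castSucc)
      (fun j => Λ j.castSucc ++
        (Λ j.castSucc ×ˢ ΛB).map (fun p => some (actR (actL p.1 (s₀ * y)) p.2)))
      (by
        intro j
        rw [List.length_append, List.length_map, List.length_product]
        have h1 := hΛ j.castSucc
        have h2 := hΛ (Fin.last (m + 1))
        rw [← hΛB] at h2
        nlinarith)
      (by
        intro t
        obtain ⟨i, l, hl, hmem⟩ := hcov t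
        by_cases hi : i = Fin.last (m + 1)
        · subst hi
          obtain ⟨i', M, hM, hu⟩ := hcov (s₀ * y * actL l t)
          have hi' : i' ≠ Fin.last (m + 1) := by
            rintro rfl
            refine hy (actL M s₀) (List.mem_map_of_mem hM) (actL l t) hmem ?_
            have : actL M s₀ * y * actL l t = actL M (s₀ * y * actL l t) := by
              rw [actL_mul, actL_mul]
            rw [this]; exact hu
          obtain ⟨j, rfl⟩ := Fin.exists_castSucc_eq.2 hi'
          refine ⟨j, some (actR (actL M (s₀ * y)) l), ?_, ?_⟩
          · refine List.mem_append_right _ ?_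
            exact List.mem_map_of_mem (List.pair_mem_product.2 ⟨hM, hl⟩)
          · rw [actL_key]
            have : s₀ * y * actL l t = (s₀ * y) * actL l t := rfl
            exact hu
        · obtain ⟨j, rfl⟩ := Fin.exists_castSucc_eq.2 hi
          exact ⟨j, l, List.mem_append_left _ hl, hmem⟩)
      hN2
    exact ⟨j.castSucc, W, hWlen, hW⟩

theorem stmt_0 {S : Type*} [Semigroup S] (n : ℕ) (hn : 1 ≤ n)
    (A : Fin n → Set S) (hcov : ⋃ i, A i = Set.univ) :
    ∃ i : Fin n, ∃ K : Set S,
      K.encard ≤ 2 ^ (2 ^ (n - 1) - 1) ∧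
      setPreimg K (Delta (A i)) = Set.univ := by
  classical
  obtain ⟨m, rfl⟩ : ∃ m, n = m + 1 := ⟨n - 1, (Nat.succ_pred_eq_of_pos hn).symm⟩
  have hcov' : ∀ x : S, ∃ i, ∃ l ∈ ([none] : List (Option S)), actL l x ∈ A i := by
    intro x
    have hx : x ∈ ⋃ i, A i := hcov ▸ Set.mem_univ x
    obtain ⟨i, hi⟩ := Set.mem_iUnion.1 hx
    exact ⟨i, none, by simp, hi⟩
  have hFb : Fb m 1 ≤ 2 ^ (2 ^ m - 1) := by simpa using Fb_le m 1 le_rfl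
  obtain ⟨i, W, hWlen, hW⟩ := core m 1 (2 ^ (2 ^ m - 1)) A (fun _ => [none])
    (fun _ => by simp) hcov' hFb
  refine ⟨i, ↑W.toFinset, ?_, ?_⟩
  · rw [Set.encard_coe_eq_coe_finsetCard]
    have h1 : W.toFinset.card ≤ 2 ^ (2 ^ m - 1) := le_trans W.toFinset_card_le hWlen
    have : ((W.toFinset.card : ℕ) : ℕ∞) ≤ ((2 ^ (2 ^ m - 1) : ℕ) : ℕ∞) := by
      exact_mod_cast h1
    refine le_trans this ?_
    simp [Nat.add_sub_cancel]
  · apply Set.eq_univ_of_forall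
    intro x
    obtain ⟨w, hw, a, ha, hwa⟩ := hW x
    refine Set.mem_iUnion₂.2 ⟨w, by simpa using hw, ?_⟩
    exact ⟨(w * x) * a, ⟨a, ha, rfl⟩, hwa⟩
end

section
/- Let S be a semigroup and let A₁, A₂ be subsets of S with S = A₁ ∪ A₂. Then there exist an index i ∈ {1, 2} and a subset K of S with |K| ≤ 2 such that S = K⁻¹Δ(Aᵢ). -/
lemma mem_Delta_iff {S : Type*} [Semigroup S] {A : Set S} {x : S} :
    x ∈ Delta A ↔ ∃ a ∈ A, x * a ∈ A := by
  constructor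
  · rintro ⟨y, ⟨a, ha, rfl⟩, hy⟩
    exact ⟨a, ha, hy⟩
  · rintro ⟨a, ha, hxa⟩
    exact ⟨x * a, ⟨a, ha, rfl⟩, hxa⟩

lemma mem_setPreimg_iff {S : Type*} [Semigroup S] {K B : Set S} {x : S} :
    x ∈ setPreimg K B ↔ ∃ a ∈ K, a * x ∈ B := by
  simp [setPreimg]

theorem stmt_1 {S : Type*} [Semigroup S] (A₁ A₂ : Set S)
    (hcov : A₁ ∪ A₂ = Set.univ) :
    ∃ A : Set S, (A = A₁ ∨ A = A₂) ∧ ∃ K : Set S,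
      K.encard ≤ 2 ∧ setPreimg K (Delta A) = Set.univ := by
  have hmem : ∀ x : S, x ∈ A₁ ∨ x ∈ A₂ := by
    intro x
    have : x ∈ A₁ ∪ A₂ := hcov ▸ Set.mem_univ x
    exact this
  obtain hS | hS := isEmpty_or_nonempty S
  · refine ⟨A₁, Or.inl rfl, ∅, by simp, ?_⟩
    exact Set.eq_univ_of_forall fun x => (hS.false x).elim
  · obtain ⟨s₀⟩ := hS
    by_cases h1 : ∃ t, t ∉ Delta A₁
    · obtain ⟨t, ht⟩ := h1
      by_cases h2 : ∃ u, u ∉ Delta A₂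
      · obtain ⟨u, hu⟩ := h2
        -- A₁ is nonempty: otherwise A₂ = univ and u ∈ Delta A₂
        have hA1 : A₁.Nonempty := by
          rcases hmem (u * s₀) with h | h
          · exact ⟨u * s₀, h⟩
          · rcases hmem s₀ with h' | h'
            · exact ⟨s₀, h'⟩
            · exact absurd (mem_Delta_iff.mpr ⟨s₀, h', h⟩) hu
        refine ⟨A₁, Or.inl rfl, {t, u * t}, ?_, ?_⟩
        · calc ({t, u * t} : Set S).encard ≤ ({u * t} : Set S).encard + 1 :=
                Set.encard_insert_le _ _
            _ ≤ 2 := by rw [Set.encard_singleton]; norm_num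
        · apply Set.eq_univ_of_forall
          intro x
          rw [mem_setPreimg_iff]
          by_cases hx : t * x ∈ Delta A₁
          · exact ⟨t, Or.inl rfl, hx⟩
          · obtain ⟨a, ha⟩ := hA1
            have htxa : t * x * a ∈ A₂ := by
              rcases hmem (t * x * a) with h | h
              · exact absurd (mem_Delta_iff.mpr ⟨a, ha, h⟩) hx
              · exact h
            have huta : u * (t * x * a) ∈ A₁ := by
              rcases hmem (u * (t * x * a)) with h | h
              · exact h
              · exact absurd (mem_Delta_iff.mpr ⟨t * x * a, htxa, h⟩) hu
            refine ⟨u * t, Or.inr rfl, mem_Delta_iff.mpr ⟨a, ha, ?_⟩⟩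
            have : u * t * x * a = u * (t * x * a) := by
              simp [mul_assoc]
            rw [this]; exact huta
      · push_neg at h2
        refine ⟨A₂, Or.inr rfl, {s₀}, by simp, ?_⟩
        apply Set.eq_univ_of_forall
        intro x
        exact mem_setPreimg_iff.mpr ⟨s₀, rfl, h2 _⟩
    · push_neg at h1
      refine ⟨A₁, Or.inl rfl, {s₀}, by simp, ?_⟩
      apply Set.eq_univ_of_forall
      intro x
      exact mem_setPreimg_iff.mpr ⟨s₀, rfl, h1 _⟩
end

section
/- Define f : ℕ × ℕ → ℕ (first argument ≥ 1) by f(1, m) = m and f(n+1, m) = f(n, m + m²). Let S be a semigroup, let F, A₁, A₂, ..., Aₙ be subsets of S such that S = F⁻¹(A₁ ∪ A₂ ∪ ... ∪ Aₙ) and |F| ≤ m. Then there exist an index i ∈ {1, 2, ..., n} and a subset K of S such that S = K⁻¹Δ(Aᵢ) and |K| ≤ f(n, m). -/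
lemma encard_image2_le' {α : Type*} (f : α → α → α) (s t : Set α) :
    (Set.image2 f s t).encard ≤ s.encard * t.encard := by
  simp only [Set.encard, ENat.card]
  calc Cardinal.toENat (Cardinal.mk (Set.image2 f s t))
      ≤ Cardinal.toENat (Cardinal.mk s * Cardinal.mk t) :=
        Cardinal.toENat.monotone' Cardinal.mk_image2_le
    _ = _ := map_mul _ _ _

lemma mem_setPreimg' {S : Type*} [Semigroup S] {F B : Set S} {x : S} :
    x ∈ setPreimg F B ↔ ∃ a ∈ F, a * x ∈ B := by simp [setPreimg]

lemma mem_Delta' {S : Type*} [Semigroup S] {A : Set S} {x : S} :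
    x ∈ Delta A ↔ ∃ c ∈ A, x * c ∈ A := by
  constructor
  · rintro ⟨y, ⟨c, hc, rfl⟩, hy⟩; exact ⟨c, hc, hy⟩
  · rintro ⟨c, hc, h⟩; exact ⟨x * c, ⟨c, hc, rfl⟩, h⟩

lemma f_ge' (f : ℕ → ℕ → ℕ)
    (hf1 : ∀ m : ℕ, f 1 m = m)
    (hfs : ∀ n m : ℕ, 1 ≤ n → f (n + 1) m = f n (m + m ^ 2)) :
    ∀ n m, m ≤ f (n + 1) m := by
  intro n
  induction n with
  | zero => intro m; rw [hf1]
  | succ k ih =>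
    intro m
    rw [hfs (k + 1) m (Nat.succ_le_succ (Nat.zero_le k))]
    exact le_trans (Nat.le_add_right m (m ^ 2)) (ih _)

theorem stmt_2 (f : ℕ → ℕ → ℕ)
    (hf1 : ∀ m : ℕ, f 1 m = m)
    (hfs : ∀ n m : ℕ, 1 ≤ n → f (n + 1) m = f n (m + m ^ 2))
    {S : Type*} [Semigroup S] (n m : ℕ) (hn : 1 ≤ n)
    (F : Set S) (A : Fin n → Set S)
    (hF : F.encard ≤ m)
    (hcov : setPreimg F (⋃ i, A i) = Set.univ) :
    ∃ i : Fin n, ∃ K : Set S,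
      setPreimg K (Delta (A i)) = Set.univ ∧ K.encard ≤ f n m := by
  obtain ⟨k, rfl⟩ : ∃ k, n = k + 1 := ⟨n - 1, (Nat.succ_pred_eq_of_pos hn).symm⟩
  clear hn
  induction k generalizing m F with
  | zero =>
    by_cases h : ∀ x : S, ∃ a ∈ F, a * x ∈ Delta (A 0)
    · refine ⟨0, F, Set.eq_univ_of_forall (fun x => mem_setPreimg'.mpr (h x)), ?_⟩
      rw [hf1]; exact hF
    · push_neg at h
      obtain ⟨x₀, hx₀⟩ := h
      exfalso
      have hU : (⋃ i : Fin 1, A i) = A 0 := by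
        ext x; simp [Set.mem_iUnion, Fin.exists_fin_one]
      have h1 : x₀ ∈ setPreimg F (⋃ i, A i) := hcov.symm ▸ Set.mem_univ x₀
      obtain ⟨a, ha, hax⟩ := mem_setPreimg'.mp h1
      rw [hU] at hax
      have h2 : x₀ * (a * x₀) ∈ setPreimg F (⋃ i, A i) :=
        hcov.symm ▸ Set.mem_univ _
      obtain ⟨b, hb, hbx⟩ := mem_setPreimg'.mp h2
      rw [hU] at hbx
      exact hx₀ b hb (mem_Delta'.mpr ⟨a * x₀, hax, by rw [mul_assoc]; exact hbx⟩)
  | succ k ih =>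
    set C := A (Fin.last (k + 1)) with hC
    by_cases h : ∀ x : S, ∃ a ∈ F, a * x ∈ Delta C
    · refine ⟨Fin.last (k + 1), F, Set.eq_univ_of_forall (fun x => mem_setPreimg'.mpr (h x)), ?_⟩
      refine hF.trans ?_
      exact_mod_cast Nat.cast_le.mpr (f_ge' f hf1 hfs (k + 1) m)
    · push_neg at h
      obtain ⟨x₀, hx₀⟩ := h
      set G := F ∪ Set.image2 (fun a b => a * x₀ * b) F F with hGdef
      set A' : Fin (k + 1) → Set S := fun i => A i.castSucc with hA'
      have hG : G.encard ≤ (m + m ^ 2 : ℕ) := by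
        push_cast
        refine (Set.encard_union_le _ _).trans (add_le_add hF ?_)
        refine (encard_image2_le' _ _ _).trans ?_
        calc F.encard * F.encard ≤ (m : ℕ∞) * m := mul_le_mul' hF hF
          _ = (m : ℕ∞) ^ 2 := (sq _).symm
      have hcov' : setPreimg G (⋃ i, A' i) = Set.univ := by
        apply Set.eq_univ_of_forall
        intro y
        have h1 : y ∈ setPreimg F (⋃ i, A i) := hcov.symm ▸ Set.mem_univ y
        obtain ⟨a, ha, hay⟩ := mem_setPreimg'.mp h1
        obtain ⟨j, hj⟩ := Set.mem_iUnion.mp hay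
        rcases Fin.eq_castSucc_or_eq_last j with ⟨j', rfl⟩ | rfl
        · exact mem_setPreimg'.mpr ⟨a, Or.inl ha, Set.mem_iUnion.mpr ⟨j', hj⟩⟩
        · -- a * y ∈ C
          have h2 : x₀ * (a * y) ∈ setPreimg F (⋃ i, A i) :=
            hcov.symm ▸ Set.mem_univ _
          obtain ⟨b, hb, hby⟩ := mem_setPreimg'.mp h2
          obtain ⟨j', hj'⟩ := Set.mem_iUnion.mp hby
          rcases Fin.eq_castSucc_or_eq_last j' with ⟨j'', rfl⟩ | rfl
          · refine mem_setPreimg'.mpr ⟨b * x₀ * a, Or.inr ⟨b, hb, a, ha, rfl⟩,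
              Set.mem_iUnion.mpr ⟨j'', ?_⟩⟩
            show b * x₀ * a * y ∈ A' j''
            have : b * x₀ * a * y = b * (x₀ * (a * y)) := by
              rw [mul_assoc, mul_assoc]
            rw [hA']
            simpa [this] using hj'
          · exfalso
            refine hx₀ b hb (mem_Delta'.mpr ⟨a * y, hj, ?_⟩)
            have : b * x₀ * (a * y) = b * (x₀ * (a * y)) := by rw [mul_assoc]
            rw [this]
            exact hj'
      obtain ⟨i, K, hK, hKc⟩ := ih (m + m ^ 2) G hG (A := A') hcov'
      refine ⟨i.castSucc, K, hK, hKc.trans ?_⟩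
      rw [hfs (k + 1) m (Nat.succ_le_succ (Nat.zero_le k))]
end

section
/- Let S be a semigroup, let F and A be subsets of S such that S = F⁻¹A. Then S = F⁻¹Δ(A). -/
theorem stmt_4 {S : Type*} [Semigroup S] (F A : Set S)
    (hcov : setPreimg F A = Set.univ) :
    setPreimg F (Delta A) = Set.univ := by
  ext x
  simp only [Set.mem_univ, iff_true]
  -- A is nonempty: cover x itself
  have hx : x ∈ setPreimg F A := hcov ▸ Set.mem_univ x
  obtain ⟨f₀, hf₀, hxa⟩ := by
    simpa [setPreimg] using hx
  -- a ∈ A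
  set a := f₀ * x with ha
  -- cover x * a
  have hxa' : x * a ∈ setPreimg F A := hcov ▸ Set.mem_univ _
  obtain ⟨f, hf, hfa⟩ := by
    simpa [setPreimg] using hxa'
  refine Set.mem_biUnion hf ?_
  refine ⟨(f * x) * a, ⟨a, hxa, rfl⟩, ?_⟩
  rwa [← mul_assoc] at hfa
end

section
/- Let S be a semigroup, let F, A, B be subsets of S and g ∈ S be such that S = F⁻¹(A ∪ B) and gA ⊆ F⁻¹B. Then S = (F ∪ FgF)⁻¹B, where FgF = {f₁·g·f₂ : f₁, f₂ ∈ F}. In particular, if |F| ≤ m then |F ∪ FgF| ≤ m + m². -/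
theorem stmt_6 {S : Type*} [Semigroup S] (F A B : Set S) (g : S)
    (hcov : setPreimg F (A ∪ B) = Set.univ)
    (hg : (g * ·) '' A ⊆ setPreimg F B) :
    setPreimg (F ∪ {z : S | ∃ f₁ ∈ F, ∃ f₂ ∈ F, z = f₁ * g * f₂}) B = Set.univ ∧
    ∀ m : ℕ, F.encard ≤ m →
      (F ∪ {z : S | ∃ f₁ ∈ F, ∃ f₂ ∈ F, z = f₁ * g * f₂}).encard ≤ m + m ^ 2 := by
  classical
  constructor
  · ext x
    simp only [Set.mem_univ, iff_true]
    have hx : x ∈ setPreimg F (A ∪ B) := hcov ▸ Set.mem_univ x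
    simp only [setPreimg, Set.mem_iUnion, Set.mem_setOf_eq] at hx ⊢
    obtain ⟨f, hf, hfx⟩ := hx
    rcases hfx with hA | hB
    · have : g * (f * x) ∈ setPreimg F B := hg ⟨f * x, hA, rfl⟩
      simp only [setPreimg, Set.mem_iUnion, Set.mem_setOf_eq] at this
      obtain ⟨f₁, hf₁, h1⟩ := this
      refine ⟨f₁ * g * f, Or.inr ⟨f₁, hf₁, f, hf, rfl⟩, ?_⟩
      rwa [mul_assoc, mul_assoc]
    · exact ⟨f, Or.inl hf, hB⟩
  · intro m hm
    have hF : F.Finite := Set.finite_of_encard_le_coe hm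
    set Fs : Finset S := hF.toFinset with hFs
    have hcard : (Fs.card : ℕ∞) = F.encard := by
      rw [hF.encard_eq_coe_toFinset_card]
    have hsub : {z : S | ∃ f₁ ∈ F, ∃ f₂ ∈ F, z = f₁ * g * f₂} ⊆
        ((Fs ×ˢ Fs).image fun p : S × S => p.1 * g * p.2 : Finset S) := by
      rintro z ⟨f₁, h1, f₂, h2, rfl⟩
      simp only [Finset.coe_image, Set.mem_image, Finset.mem_coe, Finset.mem_product]
      exact ⟨(f₁, f₂), by simp [hFs, Finset.mem_product, hF.mem_toFinset, h1, h2]⟩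
    have h2 : {z : S | ∃ f₁ ∈ F, ∃ f₂ ∈ F, z = f₁ * g * f₂}.encard ≤ (m : ℕ∞) ^ 2 := by
      calc _ ≤ (((Fs ×ˢ Fs).image fun p : S × S => p.1 * g * p.2 : Finset S) : Set S).encard :=
            Set.encard_le_encard hsub
        _ = (((Fs ×ˢ Fs).image fun p : S × S => p.1 * g * p.2).card : ℕ∞) :=
            Set.encard_coe_eq_coe_finsetCard _
        _ ≤ ((Fs ×ˢ Fs).card : ℕ∞) := by exact_mod_cast Finset.card_image_le
        _ = (Fs.card : ℕ∞) * (Fs.card : ℕ∞) := by rw [Finset.card_product]; push_cast; ring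
        _ ≤ (m : ℕ∞) * m := mul_le_mul' (hcard ▸ hm) (hcard ▸ hm)
        _ = (m : ℕ∞) ^ 2 := (sq (m : ℕ∞)).symm
    calc (F ∪ _).encard ≤ F.encard + _ := Set.encard_union_le _ _
      _ ≤ (m : ℕ∞) + (m : ℕ∞) ^ 2 := add_le_add hm h2
      _ = _ := by ring
end

section
/- Let S be a finite semigroup, n a positive natural number, and let A₁, ..., Aₙ be subsets of S with S = A₁ ∪ ... ∪ Aₙ. Then there exist an index i ∈ {1, ..., n} and a subset K of S with |K| ≤ n such that S = K⁻¹Δ(Aᵢ). -/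
private def pw {S : Type*} [Semigroup S] (a : S) : ℕ → S
  | 0 => a
  | n+1 => pw a n * a

private lemma pw_add {S : Type*} [Semigroup S] (a : S) (m n : ℕ) :
    pw a m * pw a n = pw a (m + n + 1) := by
  induction n with
  | zero => rfl
  | succ k ih =>
      show pw a m * (pw a k * a) = _
      rw [← mul_assoc, ih]
      rfl

private lemma pw_mem {S : Type*} [Semigroup S] {P : Set S}
    (hP : ∀ x ∈ P, ∀ y ∈ P, x * y ∈ P) {a : S} (ha : a ∈ P) (n : ℕ) : pw a n ∈ P := by
  induction n with
  | zero => exact ha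
  | succ k ih => exact hP _ ih _ ha

private lemma exists_idem_aux {S : Type*} [Semigroup S] [Finite S] {P : Set S}
    (hP : ∀ x ∈ P, ∀ y ∈ P, x * y ∈ P) {a : S} (ha : a ∈ P) :
    ∃ e ∈ P, e * e = e := by
  obtain ⟨i, j, hne, hij⟩ := Finite.exists_ne_map_eq_of_infinite (pw a)
  wlog hlt : i < j generalizing i j
  · exact this j i hne.symm hij.symm (by omega)
  set d := j - i with hd
  have hd1 : 1 ≤ d := by omega
  have hstep : ∀ m, i ≤ m → pw a (m + d) = pw a m := by
    intro m hm
    rcases Nat.exists_eq_add_of_le hm with ⟨c, rfl⟩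
    rcases c with _ | c
    · rw [Nat.add_zero, show i + d = j by omega, hij]
    · have h1 : i + (c+1) + d = (i + d) + c + 1 := by omega
      rw [h1, ← pw_add, show i + d = j by omega, ← hij, pw_add,
        show i + c + 1 = i + (c+1) by omega]
  have hper : ∀ k m, i ≤ m → pw a (m + k * d) = pw a m := by
    intro k
    induction k with
    | zero => intro m _; simp
    | succ t ih =>
        intro m hm
        have : m + (t+1) * d = (m + d) + t * d := by ring
        rw [this, ih _ (by omega), hstep _ hm]
  set N := (i + 1) * d - 1 with hN
  have hN1 : N + 1 = (i + 1) * d := by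
    have : 1 ≤ (i+1) * d := Nat.one_le_iff_ne_zero.mpr (by positivity)
    omega
  have hNi : i ≤ N := by nlinarith [hN1]
  refine ⟨pw a N, pw_mem hP ha N, ?_⟩
  rw [pw_add, show N + N + 1 = N + (i+1) * d by omega, hper _ _ hNi]

theorem stmt_7 {S : Type*} [Semigroup S] [Finite S] (n : ℕ) (hn : 1 ≤ n)
    (A : Fin n → Set S) (hcov : ⋃ i, A i = Set.univ) :
    ∃ i : Fin n, ∃ K : Set S,
      K.encard ≤ n ∧ setPreimg K (Delta (A i)) = Set.univ := by
  classical
  obtain h | hne := isEmpty_or_nonempty S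
  · refine ⟨⟨0, hn⟩, ∅, by simp, ?_⟩
    apply Set.eq_univ_of_forall
    intro x
    exact (h.false x).elim
  haveI : Fintype S := Fintype.ofFinite S
  -- minimal left ideal
  obtain ⟨L, hLmem, hLmin⟩ := Finset.exists_min_image
    ((Finset.univ : Finset (Finset S)).filter
      (fun L => L.Nonempty ∧ ∀ s : S, ∀ x ∈ L, s * x ∈ L))
    Finset.card ⟨Finset.univ, by simp [Finset.univ_nonempty]⟩
  simp only [Finset.mem_filter, Finset.mem_univ, true_and] at hLmem
  obtain ⟨hLne, hLid⟩ := hLmem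
  have hmin : ∀ L' : Finset S, L'.Nonempty → (∀ s : S, ∀ x ∈ L', s * x ∈ L') →
      L.card ≤ L'.card := by
    intro L' h1 h2
    exact hLmin L' (Finset.mem_filter.mpr ⟨Finset.mem_univ _, h1, h2⟩)
  -- ∀ a ∈ L, S*a = L
  have hSa : ∀ a ∈ L, Finset.image (· * a) Finset.univ = L := by
    intro a ha
    apply Finset.eq_of_subset_of_card_le
    · intro x hx
      simp only [Finset.mem_image, Finset.mem_univ, true_and] at hx
      obtain ⟨s, rfl⟩ := hx
      exact hLid s a ha
    · apply hmin
      · exact ⟨hne.some * a, by simp⟩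
      · intro s x hx
        simp only [Finset.mem_image, Finset.mem_univ, true_and] at hx ⊢
        obtain ⟨t, rfl⟩ := hx
        exact ⟨s * t, mul_assoc s t a⟩
  -- idempotent in L
  obtain ⟨a₀, ha₀⟩ := hLne
  obtain ⟨e, heL, hee⟩ := exists_idem_aux (P := (↑L : Set S))
    (fun x _ y hy => hLid x y hy) ha₀
  have heL' : e ∈ L := heL
  -- the group G = eSe
  set G : Finset S := Finset.image (fun s => e * s * e) Finset.univ with hG
  have heG : e ∈ G := by
    simp only [hG, Finset.mem_image, Finset.mem_univ, true_and]
    exact ⟨e, by rw [hee, hee]⟩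
  have hGe : ∀ g ∈ G, g * e = g ∧ e * g = g := by
    intro g hg
    simp only [hG, Finset.mem_image, Finset.mem_univ, true_and] at hg
    obtain ⟨s, rfl⟩ := hg
    constructor
    · rw [mul_assoc (e * s), hee]
    · rw [← mul_assoc, ← mul_assoc, hee]
  have hGL : ∀ g ∈ G, g ∈ L := by
    intro g hg
    simp only [hG, Finset.mem_image, Finset.mem_univ, true_and] at hg
    obtain ⟨s, rfl⟩ := hg
    exact hLid (e * s) e heL'
  have hGmul : ∀ g ∈ G, ∀ h ∈ G, g * h ∈ G := by
    intro g hg h hh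
    have h1 := (hGe g hg).2
    have h2 := (hGe h hh).1
    simp only [hG, Finset.mem_image, Finset.mem_univ, true_and]
    exact ⟨g * h, by rw [← mul_assoc e g h, h1, mul_assoc g h e, h2]⟩
  have hlinv : ∀ g ∈ G, ∃ h ∈ G, h * g = e := by
    intro g hg
    have hgL : g ∈ L := hGL g hg
    have himg := hSa g hgL
    have heim : e ∈ Finset.image (· * g) Finset.univ := by rw [himg]; exact heL'
    simp only [Finset.mem_image, Finset.mem_univ, true_and] at heim
    obtain ⟨t, ht⟩ := heim
    refine ⟨e * t * e, ?_, ?_⟩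
    · simp only [hG, Finset.mem_image, Finset.mem_univ, true_and]
      exact ⟨t, rfl⟩
    · have h2 := (hGe g hg).2
      calc e * t * e * g = e * t * (e * g) := by rw [mul_assoc]
        _ = e * t * g := by rw [h2]
        _ = e * (t * g) := by rw [mul_assoc]
        _ = e * e := by rw [ht]
        _ = e := hee
  have hinv : ∀ g ∈ G, ∃ h ∈ G, h * g = e ∧ g * h = e := by
    intro g hg
    obtain ⟨h, hh, hhg⟩ := hlinv g hg
    obtain ⟨h', hh', hh'h⟩ := hlinv h hh
    have hgh' : g = h' := by
      have h1 : h' * (h * g) = h' * e := by rw [hhg]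
      rw [← mul_assoc, hh'h, (hGe g hg).2] at h1
      rw [h1, (hGe h' hh').1]
    exact ⟨h, hh, hhg, by rw [hgh', hh'h]⟩
  -- cells restricted to G
  set B : Fin n → Finset S := fun j => G.filter (· ∈ A j) with hB
  have hcov' : ∀ g ∈ G, ∃ j, g ∈ B j := by
    intro g hg
    have hgu : g ∈ ⋃ j, A j := by rw [hcov]; trivial
    obtain ⟨j, hj⟩ := Set.mem_iUnion.mp hgu
    exact ⟨j, by simp [hB, Finset.mem_filter, hg, hj]⟩
  obtain ⟨i, _, hi⟩ := Finset.exists_max_image (Finset.univ : Finset (Fin n))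
    (fun j => (B j).card) ⟨⟨0, hn⟩, Finset.mem_univ _⟩
  have hGsub : G ⊆ Finset.univ.biUnion B := by
    intro g hg
    obtain ⟨j, hj⟩ := hcov' g hg
    exact Finset.mem_biUnion.mpr ⟨j, Finset.mem_univ _, hj⟩
  have hGcard : G.card ≤ n * (B i).card := by
    calc G.card ≤ (Finset.univ.biUnion B).card := Finset.card_le_card hGsub
      _ ≤ ∑ j, (B j).card := Finset.card_biUnion_le
      _ ≤ ∑ _j : Fin n, (B i).card := Finset.sum_le_sum (fun j _ => hi j (Finset.mem_univ _))
      _ = n * (B i).card := by simp [Finset.sum_const, Finset.card_univ, mul_comm]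
  have hBine : (B i).Nonempty := by
    obtain ⟨j, hj⟩ := hcov' e heG
    have h1 : 0 < (B j).card := Finset.card_pos.mpr ⟨e, hj⟩
    have h2 := hi j (Finset.mem_univ _)
    exact Finset.card_pos.mp (by omega)
  have hBiG : B i ⊆ G := Finset.filter_subset _ _
  have hBiA : ∀ b ∈ B i, b ∈ A i := fun b hb => (Finset.mem_filter.mp hb).2
  -- maximal disjoint family of translates
  set tr : S → Finset S := fun f => (B i).image (f * ·) with htr
  set fam : Finset (Finset S) := Finset.univ.filter
    (fun F => F ⊆ G ∧ ∀ f ∈ F, ∀ f' ∈ F, f ≠ f' → Disjoint (tr f) (tr f')) with hfam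
  have hemp : ∅ ∈ fam := by simp [hfam]
  obtain ⟨F, hFmem, hFmax⟩ := Finset.exists_max_image fam Finset.card ⟨∅, hemp⟩
  simp only [hfam, Finset.mem_filter, Finset.mem_univ, true_and] at hFmem
  obtain ⟨hFG, hFdisj⟩ := hFmem
  have htrcard : ∀ f ∈ G, (tr f).card = (B i).card := by
    intro f hf
    apply Finset.card_image_of_injOn
    intro b hb b' hb' hbe
    obtain ⟨h, hhG, hhf, _⟩ := hinv f hf
    have hbe' : f * b = f * b' := hbe
    have h1 : h * (f * b) = h * (f * b') := by rw [hbe']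
    rwa [← mul_assoc, ← mul_assoc, hhf, (hGe b (hBiG hb)).2, (hGe b' (hBiG hb')).2] at h1
  have htrG : ∀ f ∈ G, tr f ⊆ G := by
    intro f hf y hy
    simp only [htr, Finset.mem_image] at hy
    obtain ⟨b, hb, rfl⟩ := hy
    exact hGmul f hf b (hBiG hb)
  have hFcard : F.card ≤ n := by
    have h1 : (F.biUnion tr).card = ∑ f ∈ F, (tr f).card :=
      Finset.card_biUnion (fun f hf f' hf' hne' => hFdisj f hf f' hf' hne')
    have h2 : ∑ f ∈ F, (tr f).card = F.card * (B i).card := by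
      rw [Finset.sum_congr rfl (fun f hf => htrcard f (hFG hf))]
      simp [Finset.sum_const, mul_comm]
    have h3 : F.biUnion tr ⊆ G := by
      intro y hy
      obtain ⟨f, hf, hy2⟩ := Finset.mem_biUnion.mp hy
      exact htrG f (hFG hf) hy2
    have h4 : F.card * (B i).card ≤ n * (B i).card := by
      rw [← h2, ← h1]; exact le_trans (Finset.card_le_card h3) hGcard
    exact Nat.le_of_mul_le_mul_right h4 (Finset.card_pos.mpr hBine)
  -- the set of inverses
  set inv : S → S := fun g => if h : g ∈ G then (hinv g h).choose else g with hinvdef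
  have hinvspec : ∀ g, (h : g ∈ G) → inv g ∈ G ∧ inv g * g = e := by
    intro g h
    simp only [hinvdef, dif_pos h]
    obtain ⟨h1, h2, _⟩ := (hinv g h).choose_spec
    exact ⟨h1, h2⟩
  refine ⟨i, ↑(F.image inv), ?_, ?_⟩
  · rw [Set.encard_coe_eq_coe_finsetCard]
    exact_mod_cast le_trans Finset.card_image_le hFcard
  apply Set.eq_univ_of_forall
  intro x
  have hgG : e * x * e ∈ G := by
    simp only [hG, Finset.mem_image, Finset.mem_univ, true_and]
    exact ⟨x, rfl⟩
  set g := e * x * e with hgdef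
  -- maximality gives a meeting translate
  have hex : ∃ f ∈ F, ¬ Disjoint (tr g) (tr f) := by
    by_contra hcon
    push_neg at hcon
    have hgF : g ∉ F := by
      intro hgF
      have hd := hcon g hgF
      obtain ⟨b, hb⟩ := hBine
      have hmem : g * b ∈ tr g := Finset.mem_image_of_mem _ hb
      exact (Finset.disjoint_left.mp hd hmem) hmem
    have hins : insert g F ∈ fam := by
      simp only [hfam, Finset.mem_filter, Finset.mem_univ, true_and]
      constructor
      · intro y hy
        rcases Finset.mem_insert.mp hy with rfl | hy
        · exact hgG
        · exact hFG hy
      · intro f hf f' hf' hne'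
        rcases Finset.mem_insert.mp hf with rfl | hf
        · rcases Finset.mem_insert.mp hf' with rfl | hf'
          · exact absurd rfl hne'
          · exact hcon f' hf'
        · rcases Finset.mem_insert.mp hf' with rfl | hf'
          · exact (hcon f hf).symm
          · exact hFdisj f hf f' hf' hne'
    have hle := hFmax _ hins
    rw [Finset.card_insert_of_notMem hgF] at hle
    omega
  obtain ⟨f, hfF, hndisj⟩ := hex
  rw [Finset.not_disjoint_iff] at hndisj
  obtain ⟨y, hy1, hy2⟩ := hndisj
  simp only [htr, Finset.mem_image] at hy1 hy2
  obtain ⟨b, hb, hgb⟩ := hy1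
  obtain ⟨b', hb', hfb'⟩ := hy2
  have hfG : f ∈ G := hFG hfF
  obtain ⟨hkG, hkf⟩ := hinvspec f hfG
  set k := inv f with hk
  have key : (k * x) * b = b' := by
    have h1 : k * (g * b) = k * (f * b') := by rw [hgb, hfb']
    have h2 : k * (f * b') = b' := by
      rw [← mul_assoc, hkf, (hGe b' (hBiG hb')).2]
    have h3 : k * (g * b) = (k * x) * b := by
      rw [hgdef]
      have heb : e * b = b := (hGe b (hBiG hb)).2
      have hke : k * e = k := (hGe k hkG).1
      calc k * (e * x * e * b) = k * (e * x * (e * b)) := by rw [mul_assoc (e * x)]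
        _ = k * (e * x * b) := by rw [heb]
        _ = k * (e * (x * b)) := by rw [mul_assoc e x b]
        _ = (k * e) * (x * b) := by rw [mul_assoc]
        _ = k * (x * b) := by rw [hke]
        _ = (k * x) * b := by rw [mul_assoc]
    rw [← h3, h1, h2]
  have hkx : k * x ∈ Delta (A i) := by
    refine ⟨b', ⟨⟨b, hBiA b hb, key⟩, hBiA b' hb'⟩⟩
  simp only [setPreimg, Set.mem_iUnion, Set.mem_setOf_eq]
  exact ⟨k, Finset.mem_coe.mpr (Finset.mem_image_of_mem inv hfF), hkx⟩
end
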